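/- There exists a universal constant c > 0 such that for all integers n, W ≥ 1 and every real λ ≥ 0, P_{∞,W,n}(max C_π(0) > λ + 2W) ≤ (1 − c/W²)·P_{∞,W,n}(max C_π(0) > λ). -/

import Mathlib

open Finset

/-- The integer interval `[-n, n]`, as a type. -/
abbrev Box (n : ℕ) : Type := {x : ℤ // x ∈ Finset.Icc (-(n : ℤ)) (n : ℤ)}

/-- The point `0 ∈ [-n, n]`. -/
def boxZero (n : ℕ) : Box n :=
  ⟨0, by simp⟩

/-- The maximum of the cycle of `j` under `π`, i.e. `max C_π(j)` where
`C_π(j) = {π^k(j) : k ∈ ℤ}`. -/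
noncomputable def maxCycle {n : ℕ} (π : Equiv.Perm (Box n)) (j : Box n) : ℤ :=
  sSup {x : ℤ | ∃ k : ℤ, (((π ^ k) j : Box n) : ℤ) = x}

/-- The minimum of the cycle of `j` under `π`. -/
noncomputable def minCycle {n : ℕ} (π : Equiv.Perm (Box n)) (j : Box n) : ℤ :=
  sInf {x : ℤ | ∃ k : ℤ, (((π ^ k) j : Box n) : ℤ) = x}

/-- The diameter of the cycle of `j` under `π`. -/
noncomputable def diamCycle {n : ℕ} (π : Equiv.Perm (Box n)) (j : Box n) : ℤ :=
  maxCycle π j - minCycle π j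

/-- The Boltzmann–Gibbs weight `exp(-W^{-p} Σ_i |π(i) - i|^p)`. -/
noncomputable def gibbsWeight (p : ℝ) (W n : ℕ) (π : Equiv.Perm (Box n)) : ℝ :=
  Real.exp (-(W : ℝ) ^ (-p) * ∑ i : Box n, |((π i : ℤ) : ℝ) - ((i : ℤ) : ℝ)| ^ p)

open scoped Classical in
/-- The probability of the event `E` under the Gibbs measure `P_{p,W,n}`. -/
noncomputable def gibbsProb (p : ℝ) (W n : ℕ) (E : Set (Equiv.Perm (Box n))) : ℝ :=
  (∑ π : Equiv.Perm (Box n), if π ∈ E then gibbsWeight p W n π else 0) /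
    ∑ π : Equiv.Perm (Box n), gibbsWeight p W n π

/-- The probability of a single permutation under the Gibbs measure `P_{p,W,n}`. -/
noncomputable def gibbsP (p : ℝ) (W n : ℕ) (π : Equiv.Perm (Box n)) : ℝ :=
  gibbsWeight p W n π / ∑ σ : Equiv.Perm (Box n), gibbsWeight p W n σ

/-- The set `S_W` of permutations displacing each point by at most `W`. -/
def SW (n W : ℕ) : Set (Equiv.Perm (Box n)) :=
  {π | ∀ i : Box n, |(π i : ℤ) - (i : ℤ)| ≤ (W : ℤ)}

open scoped Classical in
/-- The probability of the event `E` under the uniform measure `P_{∞,W,n}` on `S_W`. -/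
noncomputable def unifProb (W n : ℕ) (E : Set (Equiv.Perm (Box n))) : ℝ :=
  ((Finset.univ.filter fun π : Equiv.Perm (Box n) => π ∈ SW n W ∧ π ∈ E).card : ℝ) /
    ((Finset.univ.filter fun π : Equiv.Perm (Box n) => π ∈ SW n W).card : ℝ)

/-- `Period(π, j)`: the least positive `m` with `π^m(j) = j`. -/
noncomputable def permPeriod {n : ℕ} (π : Equiv.Perm (Box n)) (j : Box n) : ℕ :=
  sInf {m : ℕ | 0 < m ∧ (π ^ m) j = j}

/-- `i_first(π)` for the threshold `t`. -/
noncomputable def iFirst {n : ℕ} (t : ℝ) (π : Equiv.Perm (Box n)) : ℕ :=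
  sInf {j : ℕ | ((((π ^ j) (boxZero n) : Box n) : ℤ) : ℝ) ≤ t ∧
    t < ((((π ^ (j + 1)) (boxZero n) : Box n) : ℤ) : ℝ)}

/-- `i_last(π)` for the threshold `t`. -/
noncomputable def iLast {n : ℕ} (t : ℝ) (π : Equiv.Perm (Box n)) : ℕ :=
  sSup {j : ℕ | j < permPeriod π (boxZero n) ∧
    ((((π ^ (j + 1)) (boxZero n) : Box n) : ℤ) : ℝ) ≤ t ∧
    t < ((((π ^ j) (boxZero n) : Box n) : ℤ) : ℝ)}

/-- The uncrossing map `Φ_t(π) = π ∘ (π^{i_first+1}(0)  π^{i_last+1}(0))`. -/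
noncomputable def Phi {n : ℕ} (t : ℝ) (π : Equiv.Perm (Box n)) : Equiv.Perm (Box n) :=
  π * Equiv.swap ((π ^ (iFirst t π + 1)) (boxZero n)) ((π ^ (iLast t π + 1)) (boxZero n))

/-!
Take `π ∈ S_W` whose cycle through `0` rises above `λ + 2W`, and put `s = ⌊λ + W⌋`. Walk from `0`
forwards and backwards along the cycle until each walk first exceeds `s`; let `x` be the last point
`≤ s` of the forward walk and `y` the first point `> s` of the backward walk. Composing `π` with the
transposition `(x y)` short-circuits the cycle into `0 → ⋯ → x → π y → ⋯ → 0`, whose points are all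
`≤ s`. Steps of size `≤ W` give `x ∈ (s - W, s]` and `y ∈ (s, s + W]`, so the new permutation lies
in `S_W`, has `λ < max C(0) ≤ λ + 2W`, and has at most `W²` preimages. Hence
`P(max C(0) > λ + 2W) ≤ W² / (W² + 1) · P(max C(0) > λ)`, and `W² / (W² + 1) ≤ 1 - 1 / (2W²)`.
-/

open Equiv Equiv.Perm

lemma exists_forall_le_and_not_succ {p : ℕ → Prop} (h0 : p 0) (h : ∃ m, ¬ p m) :
    ∃ i, (∀ j ≤ i, p j) ∧ ¬ p (i + 1) := by
  classical
  have h' : ∃ i, ¬ p (i + 1) := by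
    obtain ⟨m, hm⟩ := h
    obtain ⟨i, rfl⟩ : ∃ i, m = i + 1 :=
      Nat.exists_eq_add_one_of_ne_zero (by rintro rfl; exact hm h0)
    exact ⟨i, hm⟩
  refine ⟨Nat.find h', fun j hj => ?_, Nat.find_spec h'⟩
  rcases j with _ | j
  · exact h0
  · exact not_not.mp (Nat.find_min h' (by omega))

namespace Equiv.Perm

variable {α : Type*} [DecidableEq α] {π : Perm α} {L : Set α} {a x y : α} {i k : ℕ}

lemma mul_swap_apply_of_mem (hx : π x ∉ L) (hy : y ∉ L) {v : α} (hv : v ∈ L) (hπv : π v ∈ L) :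
    (π * swap x y) v = π v := by
  rw [mul_apply, swap_apply_of_ne_of_ne (by rintro rfl; exact hx hπv) (by rintro rfl; exact hy hv)]

lemma pow_mul_swap_apply_eq_pow_apply (hfwd : ∀ j ≤ i, (π ^ j) a ∈ L) (hx : π x ∉ L) (hy : y ∉ L) :
    ∀ j ≤ i, ((π * swap x y) ^ j) a = (π ^ j) a := by
  intro j hj
  induction j with
  | zero => rfl
  | succ j ih =>
    have hsucc : (π ^ (j + 1)) a = π ((π ^ j) a) := by rw [pow_succ', mul_apply]
    rw [pow_succ', mul_apply, ih (by omega), hsucc,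
      mul_swap_apply_of_mem hx hy (hfwd j (by omega)) (hsucc ▸ hfwd (j + 1) hj)]

lemma pow_mul_swap_apply_mem (hfwd : ∀ j ≤ i, (π ^ j) a ∈ L) (hx : (π ^ (i + 1)) a ∉ L)
    (hbwd : ∀ j ≤ k, (π⁻¹ ^ j) a ∈ L) (hy : (π⁻¹ ^ (k + 1)) a ∉ L) (m : ℕ) :
    ((π * swap ((π ^ i) a) ((π⁻¹ ^ (k + 1)) a)) ^ m) a ∈ L := by
  set σ := π * swap ((π ^ i) a) ((π⁻¹ ^ (k + 1)) a)
  have hfwd_succ : ∀ j, (π ^ (j + 1)) a = π ((π ^ j) a) := fun j => by rw [pow_succ', mul_apply]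
  have hbwd_succ : ∀ j, π ((π⁻¹ ^ (j + 1)) a) = (π⁻¹ ^ j) a := fun j => by
    rw [pow_succ', mul_apply]; exact π.apply_symm_apply _
  rw [hfwd_succ] at hx
  -- the forward walk up to `x` and the backward walk down to `π y` form a `σ`-invariant set
  let V : Set α := {v | (∃ j ≤ i, (π ^ j) a = v) ∨ ∃ j ≤ k, (π⁻¹ ^ j) a = v}
  have hσ_fwd : ∀ j ≤ i, σ ((π ^ j) a) ∈ V := by
    intro j hj
    rcases hj.lt_or_eq with hj | rfl
    · rw [mul_swap_apply_of_mem hx hy (hfwd j hj.le) (hfwd_succ j ▸ hfwd (j + 1) hj), ← hfwd_succ]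
      exact Or.inl ⟨j + 1, hj, rfl⟩
    · rw [mul_apply, swap_apply_left, hbwd_succ]
      exact Or.inr ⟨k, le_rfl, rfl⟩
  have hσV : ∀ v ∈ V, σ v ∈ V := by
    rintro _ (⟨j, hj, rfl⟩ | ⟨_ | j, hj, rfl⟩)
    · exact hσ_fwd j hj
    · exact hσ_fwd 0 (Nat.zero_le _)
    · rw [mul_swap_apply_of_mem hx hy (hbwd (j + 1) hj) ((hbwd_succ j).symm ▸ hbwd j (by omega)),
        hbwd_succ]
      exact Or.inr ⟨j, by omega, rfl⟩
  have hVL : V ⊆ L := by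
    rintro _ (⟨j, hj, rfl⟩ | ⟨j, hj, rfl⟩)
    exacts [hfwd j hj, hbwd j hj]
  refine hVL ?_
  induction m with
  | zero => exact Or.inl ⟨0, Nat.zero_le _, rfl⟩
  | succ m ih => rw [pow_succ', mul_apply]; exact hσV _ ih

end Equiv.Perm

section Box

variable {n W : ℕ}

lemma inv_mem_SW {π : Perm (Box n)} (hπ : π ∈ SW n W) : π⁻¹ ∈ SW n W := fun v => by
  simpa [abs_sub_comm] using hπ (π⁻¹ v)

lemma mul_swap_mem_SW {π : Perm (Box n)} (hπ : π ∈ SW n W) {x y : Box n}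
    (hx : |(π y : ℤ) - x| ≤ W) (hy : |(π x : ℤ) - y| ≤ W) : π * swap x y ∈ SW n W := by
  intro v
  rcases eq_or_ne v x with rfl | hvx
  · simpa using hx
  rcases eq_or_ne v y with rfl | hvy
  · simpa using hy
  · simpa [swap_apply_of_ne_of_ne hvx hvy] using hπ v

lemma card_box_filter_Ioc_le (lo hi : ℤ) :
    #{v : Box n | lo < (v : ℤ) ∧ (v : ℤ) ≤ hi} ≤ (hi - lo).toNat := by
  rw [← Int.card_Ioc]
  exact card_le_card_of_injOn (↑) (fun v hv => by simpa using hv) Subtype.val_injective.injOn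

lemma bddAbove_coe_zpow_apply (π : Perm (Box n)) (j : Box n) :
    BddAbove {x : ℤ | ∃ k : ℤ, (((π ^ k) j : Box n) : ℤ) = x} :=
  ⟨n, by rintro _ ⟨k, rfl⟩; exact (mem_Icc.mp ((π ^ k) j).prop).2⟩

lemma le_maxCycle {π : Perm (Box n)} {j v : Box n} (h : π.SameCycle j v) :
    (v : ℤ) ≤ maxCycle π j := by
  obtain ⟨k, rfl⟩ := h
  exact le_csSup (bddAbove_coe_zpow_apply π j) ⟨k, rfl⟩

lemma exists_sameCycle_coe_eq_maxCycle (π : Perm (Box n)) (j : Box n) :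
    ∃ v, π.SameCycle j v ∧ (v : ℤ) = maxCycle π j := by
  obtain ⟨k, hk⟩ : ∃ k : ℤ, (((π ^ k) j : Box n) : ℤ) = maxCycle π j :=
    Int.csSup_mem (s := {x : ℤ | ∃ k : ℤ, (((π ^ k) j : Box n) : ℤ) = x}) ⟨_, 0, rfl⟩
      (bddAbove_coe_zpow_apply π j)
  exact ⟨_, ⟨k, rfl⟩, hk⟩

lemma maxCycle_le {π : Perm (Box n)} {j : Box n} {b : ℤ}
    (h : ∀ m : ℕ, (((π ^ m) j : Box n) : ℤ) ≤ b) : maxCycle π j ≤ b := by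
  obtain ⟨v, hv, hv_max⟩ := exists_sameCycle_coe_eq_maxCycle π j
  obtain ⟨m, rfl⟩ := hv.exists_nat_pow_eq
  exact hv_max ▸ h m

theorem exists_mul_swap_maxCycle_le {π : Perm (Box n)} (hπ : π ∈ SW n W) {a : Box n} {s : ℤ}
    (ha : (a : ℤ) ≤ s) (hs : s < maxCycle π a) :
    ∃ x y : Box n, s - W < x ∧ s < y ∧ y ≤ s + W ∧ π * swap x y ∈ SW n W ∧
      (x : ℤ) ≤ maxCycle (π * swap x y) a ∧ maxCycle (π * swap x y) a ≤ s := by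
  let L : Set (Box n) := {v | (v : ℤ) ≤ s}
  obtain ⟨v, hav, hv⟩ := exists_sameCycle_coe_eq_maxCycle π a
  have hvL : v ∉ L := by simp [L, hv, hs]
  obtain ⟨i, hfwd, hx⟩ := exists_forall_le_and_not_succ (p := fun j => (π ^ j) a ∈ L) ha <|
    let ⟨m, hm⟩ := hav.exists_nat_pow_eq; ⟨m, hm ▸ hvL⟩
  obtain ⟨k, hbwd, hy⟩ := exists_forall_le_and_not_succ (p := fun j => (π⁻¹ ^ j) a ∈ L) ha <|
    let ⟨m, hm⟩ := (sameCycle_inv.mpr hav).exists_nat_pow_eq; ⟨m, hm ▸ hvL⟩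
  set x := (π ^ i) a
  set y := (π⁻¹ ^ (k + 1)) a
  have hπx : π x = (π ^ (i + 1)) a := by rw [pow_succ', mul_apply]
  have hπy : π y = (π⁻¹ ^ k) a := by
    simp only [y, pow_succ', mul_apply]
    exact π.apply_symm_apply _
  have hx_step := abs_le.mp (hπ x)
  have hy_step := abs_le.mp (hπ y)
  have hxL : (x : ℤ) ≤ s := hfwd i le_rfl
  have hπxL : s < π x := by simpa [L, hπx] using hx
  have hyL : s < y := by simpa [L] using hy
  have hπyL : (π y : ℤ) ≤ s := hπy ▸ hbwd k le_rfl
  refine ⟨x, y, by omega, hyL, by omega,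
    mul_swap_mem_SW hπ (abs_le.mpr ⟨by omega, by omega⟩) (abs_le.mpr ⟨by omega, by omega⟩),
    le_maxCycle ⟨i, ?_⟩, maxCycle_le (pow_mul_swap_apply_mem hfwd hx hbwd hy)⟩
  rw [zpow_natCast, pow_mul_swap_apply_eq_pow_apply hfwd (hπx ▸ hx) hy i le_rfl]

end Box

lemma card_le_card_mul_of_forall_exists_mul_swap_mem {α : Type*} [DecidableEq α]
    {A D : Finset (Perm α)} {X Y : Finset α} (h : ∀ π ∈ A, ∃ x ∈ X, ∃ y ∈ Y, π * swap x y ∈ D) :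
    #A ≤ #D * (#X * #Y) := by
  classical
  calc #A ≤ #((D ×ˢ X ×ˢ Y).image fun q => q.1 * swap q.2.1 q.2.2) := by
        refine card_le_card fun π hπ => ?_
        obtain ⟨x, hx, y, hy, hσ⟩ := h π hπ
        exact mem_image.mpr ⟨(π * swap x y, x, y), by simp [hσ, hx, hy], mul_swap_mul_self x y π⟩
    _ ≤ #(D ×ˢ X ×ˢ Y) := card_image_le
    _ = #D * (#X * #Y) := by rw [card_product, card_product]

lemma le_one_sub_div_mul {a b d w : ℝ} (hw : 1 ≤ w) (ha : 0 ≤ a) (had : a ≤ w * d)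
    (hadb : a + d ≤ b) : a ≤ (1 - 1 / 2 / w) * b := by
  have hw0 : 0 < w := by linarith
  -- `a ≤ w / (w + 1) * b`, and `w / (w + 1) ≤ 1 - 1 / (2 * w)` since `w ≥ 1`
  have hab : (w + 1) * a ≤ w * b := by nlinarith
  rw [one_sub_div (by positivity), div_mul_eq_mul_div, le_div_iff₀ (by positivity)]
  nlinarith [mul_le_mul_of_nonneg_left hab (by linarith : 0 ≤ w - 1 / 2),
    mul_nonneg (by linarith : 0 ≤ w - 1) ha]

section Probability

variable {n W : ℕ} {E F : Set (Perm (Box n))} {w : ℝ}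

open scoped Classical in
lemma unifProb_le_one_sub_div_mul (hw : 1 ≤ w) (hEF : E ⊆ F)
    (hcard : (#{π | π ∈ SW n W ∧ π ∈ E} : ℝ) ≤ w * #{π | π ∈ SW n W ∧ π ∈ F \ E}) :
    unifProb W n E ≤ (1 - 1 / 2 / w) * unifProb W n F := by
  have hsplit : #{π | π ∈ SW n W ∧ π ∈ E} + #{π | π ∈ SW n W ∧ π ∈ F \ E} ≤
      #{π | π ∈ SW n W ∧ π ∈ F} := by
    rw [← card_union_of_disjoint (disjoint_filter.mpr fun _ _ h h' => h'.2.2 h.2)]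
    refine card_le_card fun π hπ => ?_
    simp only [mem_union, mem_filter_univ, Set.mem_sdiff] at hπ ⊢
    rcases hπ with ⟨h, h'⟩ | ⟨h, h', _⟩
    exacts [⟨h, hEF h'⟩, ⟨h, h'⟩]
  unfold unifProb
  rw [← mul_div_assoc]
  gcongr
  exact le_one_sub_div_mul hw (Nat.cast_nonneg _) hcard (by exact_mod_cast hsplit)

lemma unifProb_le_of_forall_exists_mul_swap {X Y : Finset (Box n)} (hw : 1 ≤ w)
    (hXY : (#X * #Y : ℝ) ≤ w) (hEF : E ⊆ F)
    (h : ∀ π ∈ SW n W, π ∈ E → ∃ x ∈ X, ∃ y ∈ Y, π * swap x y ∈ SW n W ∧ π * swap x y ∈ F \ E) :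
    unifProb W n E ≤ (1 - 1 / 2 / w) * unifProb W n F := by
  classical
  refine unifProb_le_one_sub_div_mul hw hEF ?_
  calc (#{π | π ∈ SW n W ∧ π ∈ E} : ℝ)
      ≤ #{π | π ∈ SW n W ∧ π ∈ F \ E} * (#X * #Y) := by
        refine mod_cast card_le_card_mul_of_forall_exists_mul_swap_mem fun π hπ => ?_
        rw [mem_filter_univ] at hπ
        simpa only [mem_filter_univ] using h π hπ.1 hπ.2
    _ ≤ w * #{π | π ∈ SW n W ∧ π ∈ F \ E} := by
        rw [mul_comm]
        gcongr

end Probability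

/-- There is a universal constant `c > 0` such that for all integers
`n, W ≥ 1` and every real `λ ≥ 0`,
`P_{∞,W,n}(max C_π(0) > λ + 2W) ≤ (1 - c/W²) P_{∞,W,n}(max C_π(0) > λ)`. -/
theorem one_step_contraction_uniform :
    ∃ c : ℝ, 0 < c ∧ ∀ (n W : ℕ), 1 ≤ n → 1 ≤ W → ∀ lam : ℝ, 0 ≤ lam →
      unifProb W n {π | lam + 2 * W < ((maxCycle π (boxZero n) : ℤ) : ℝ)} ≤
        (1 - c / (W : ℝ) ^ 2) *
          unifProb W n {π | lam < ((maxCycle π (boxZero n) : ℤ) : ℝ)} := by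
  refine ⟨1 / 2, by norm_num, fun n W _ hW lam hlam => ?_⟩
  set s := ⌊lam + W⌋
  have hs_lo : lam + W - 1 < s := Int.sub_one_lt_floor _
  have hs_hi : (s : ℝ) ≤ lam + W := Int.floor_le _
  refine unifProb_le_of_forall_exists_mul_swap (X := {v : Box n | s - W < (v : ℤ) ∧ (v : ℤ) ≤ s})
    (Y := {v : Box n | s < (v : ℤ) ∧ (v : ℤ) ≤ s + W}) (one_le_pow₀ (by exact_mod_cast hW)) ?_
    (Set.ofPred_subset_ofPred.mpr fun π h => by linarith) fun π hπ hE => ?_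
  · have hX : #{v : Box n | s - W < (v : ℤ) ∧ (v : ℤ) ≤ s} ≤ W :=
      (card_box_filter_Ioc_le _ _).trans (by omega)
    have hY : #{v : Box n | s < (v : ℤ) ∧ (v : ℤ) ≤ s + W} ≤ W :=
      (card_box_filter_Ioc_le _ _).trans (by omega)
    rw [sq]
    gcongr
  obtain ⟨x, y, hx, hy, hy', hσ, hx_max, hmax⟩ := exists_mul_swap_maxCycle_le hπ
    (a := boxZero n) (s := s) (Int.floor_nonneg.mpr (by positivity))
    ((Int.cast_lt (R := ℝ)).mp (by linarith [show lam + 2 * W < _ from hE]))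
  have hx_max' := (Int.cast_le (R := ℝ)).mpr hx_max
  have hmax' := (Int.cast_le (R := ℝ)).mpr hmax
  have hx' : (s : ℝ) - W + 1 ≤ (x : ℤ) := by exact_mod_cast hx
  refine ⟨x, (mem_filter_univ x).mpr ⟨hx, hx_max.trans hmax⟩, y, (mem_filter_univ y).mpr ⟨hy, hy'⟩,
    hσ, ?_, ?_⟩
  · show lam < _; linarith
  · show ¬ lam + 2 * W < _; linarith
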